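/- Let β, z ∈ ℝ. Define b_k = (β−1)_k/k!, define the generalized Laguerre polynomial L_k^{(β−1)}(z) = Σ_{j=0}^{k} ((−1)^j/j!) · ((β+j)_{k−j}/(k−j)!) · z^j, set c_k = L_k^{(β−1)}(z), and define d_k = (1/k!) Σ_{ν=0}^{k−1} Σ_{λ=0}^{ν} ν! (ν−λ+1)_{k−1−ν} b_{k−1−ν} c_λ for k ≥ 1. Then the sequence c satisfies the ρ₀ = 0 converging-factor recursion: c_0 = b_0 (= 1) and c_k = c_{k−1} + b_k − z d_k for every k ≥ 1. -/

import Mathlib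

/-- The Pochhammer symbol `(x)_j = x(x+1)⋯(x+j−1)`, with `(x)_0 = 1`. -/
noncomputable def poch (x : ℝ) (j : ℕ) : ℝ := ∏ i ∈ Finset.range j, (x + i)

/-- The generalized Laguerre polynomial
`L_k^{(α)}(z) = Σ_{j=0}^{k} ((−1)^j/j!) ((α+j+1)_{k−j}/(k−j)!) z^j`. -/
noncomputable def laguerre (α z : ℝ) (k : ℕ) : ℝ :=
  ∑ j ∈ Finset.range (k + 1),
    ((-1 : ℝ) ^ j / (Nat.factorial j : ℝ)) *
      (poch (α + j + 1) (k - j) / (Nat.factorial (k - j) : ℝ)) * z ^ j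

/-- The coefficients `d_k` of the product of two inverse factorial series with
coefficient sequences `b` and `c`:
`d_k = (1/k!) Σ_{ν=0}^{k−1} Σ_{λ=0}^{ν} ν! (ν−λ+1)_{k−1−ν} b_{k−1−ν} c_λ`. -/
noncomputable def prodCoeff (b c : ℕ → ℝ) (k : ℕ) : ℝ :=
  (1 / (Nat.factorial k : ℝ)) *
    ∑ ν ∈ Finset.range k, ∑ l ∈ Finset.range (ν + 1),
      (Nat.factorial ν : ℝ) * poch ((ν : ℝ) - l + 1) (k - 1 - ν) * b (k - 1 - ν) * c l

lemma poch_zero (x : ℝ) : poch x 0 = 1 := by simp [poch]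

lemma poch_succ (x : ℝ) (n : ℕ) : poch x (n+1) = poch x n * (x + n) :=
  Finset.prod_range_succ _ _

lemma poch_succ_left (x : ℝ) (n : ℕ) : poch x (n+1) = x * poch (x+1) n := by
  rw [poch, Finset.prod_range_succ', mul_comm]
  have h0 : x + ((0:ℕ):ℝ) = x := by simp
  rw [h0]
  congr 1
  apply Finset.prod_congr rfl
  intro i _
  push_cast; ring

lemma poch_add (x : ℝ) (m n : ℕ) : poch x (m+n) = poch x m * poch (x+m) n := by
  rw [poch, Finset.prod_range_add]
  congr 1
  apply Finset.prod_congr rfl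
  intro i _
  push_cast; ring

lemma fact_mul_poch (t s : ℕ) : (t.factorial : ℝ) * poch (t+1) s = ((t+s).factorial : ℝ) := by
  induction s with
  | zero => simp [poch]
  | succ s ih =>
    rw [poch_succ, ← mul_assoc, ih, show t + (s+1) = (t+s)+1 by ring, Nat.factorial_succ]
    push_cast; ring

lemma vand (a b : ℝ) (n : ℕ) :
    ∑ t ∈ Finset.range (n+1), (n.choose t : ℝ) * poch a t * poch b (n - t) = poch (a+b) n := by
  induction n with
  | zero => simp [poch]
  | succ n ih =>
    rw [Finset.sum_range_succ']
    simp only [Nat.succ_sub_succ, Nat.sub_zero, Nat.choose_zero_right, Nat.cast_one, one_mul,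
      poch_zero, mul_one]
    have h1 : ∀ t ∈ Finset.range (n+1),
        ((n+1).choose (t+1) : ℝ) * poch a (t+1) * poch b (n - t)
        = (n.choose t : ℝ) * poch a (t+1) * poch b (n - t)
          + (n.choose (t+1) : ℝ) * poch a (t+1) * poch b (n - t) := by
      intro t _
      rw [Nat.choose_succ_succ']
      push_cast; ring
    rw [Finset.sum_congr rfl h1, Finset.sum_add_distrib, add_assoc]
    have h2 : (∑ t ∈ Finset.range (n+1), (n.choose (t+1) : ℝ) * poch a (t+1) * poch b (n - t))
        + poch b (n+1)
        = ∑ t ∈ Finset.range (n+1), (n.choose t : ℝ) * poch a t * poch b (n+1 - t) := by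
      have e1 := Finset.sum_range_succ'
        (fun t => (n.choose t : ℝ) * poch a t * poch b (n+1 - t)) (n+1)
      have e2 := Finset.sum_range_succ
        (fun t => (n.choose t : ℝ) * poch a t * poch b (n+1 - t)) (n+1)
      simp only [Nat.succ_sub_succ, Nat.choose_zero_right, Nat.cast_one, one_mul, poch_zero,
        Nat.sub_zero, Nat.choose_succ_self, Nat.cast_zero, zero_mul, add_zero] at e1 e2
      linarith [e1, e2]
    rw [h2, ← Finset.sum_add_distrib]
    have h3 : ∀ t ∈ Finset.range (n+1),
        (n.choose t : ℝ) * poch a (t+1) * poch b (n - t)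
          + (n.choose t : ℝ) * poch a t * poch b (n+1 - t)
        = ((n.choose t : ℝ) * poch a t * poch b (n - t)) * (a + b + n) := by
      intro t ht
      have htn : t ≤ n := Finset.mem_range_succ_iff.mp ht
      rw [poch_succ a t, show n + 1 - t = (n - t) + 1 from by omega, poch_succ b (n-t),
        Nat.cast_sub htn]
      ring
    rw [Finset.sum_congr rfl h3, ← Finset.sum_mul, ih, ← poch_succ]

lemma T_lemma (β : ℝ) (k lam : ℕ) (h : lam ≤ k) :
    ∑ ν ∈ Finset.Icc lam k, (ν.factorial : ℝ) * poch ((ν:ℝ) - (lam:ℝ) + 1) (k - ν)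
        * (poch (β-1) (k-ν) / ((k-ν).factorial : ℝ))
      = (lam.factorial : ℝ) * poch (β + lam) (k - lam) := by
  rw [show Finset.Icc lam k = Finset.Ico lam (k+1) from rfl, Finset.sum_Ico_eq_sum_range,
    show k + 1 - lam = (k - lam) + 1 from by omega]
  set n := k - lam with hn
  have key : ∀ t ∈ Finset.range (n+1),
      ((lam+t).factorial : ℝ) * poch ((↑(lam+t):ℝ) - (lam:ℝ) + 1) (k - (lam+t))
        * (poch (β-1) (k-(lam+t)) / ((k-(lam+t)).factorial : ℝ))
      = (lam.factorial : ℝ) * ((n.choose t : ℝ) * poch ((lam:ℝ)+1) t * poch (β-1) (n - t)) := by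
    intro t ht
    have ht' : t ≤ n := Finset.mem_range_succ_iff.mp ht
    have h1 : k - (lam + t) = n - t := by omega
    have h3 : ((↑(lam+t):ℝ) - (lam:ℝ) + 1) = (t:ℝ)+1 := by push_cast; ring
    rw [h1, h3, ← fact_mul_poch lam t]
    have hp : (t.factorial : ℝ) * poch ((t:ℝ)+1) (n - t) = (n.factorial : ℝ) := by
      rw [fact_mul_poch t (n - t), show t + (n - t) = n from by omega]
    have hc : ((n.choose t : ℕ) : ℝ) * (t.factorial : ℝ) * ((n-t).factorial : ℝ)
        = (n.factorial : ℝ) := by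
      exact_mod_cast Nat.choose_mul_factorial_mul_factorial ht'
    have hft : (t.factorial : ℝ) ≠ 0 := Nat.cast_ne_zero.mpr (Nat.factorial_ne_zero t)
    have hfnt : ((n-t).factorial : ℝ) ≠ 0 := Nat.cast_ne_zero.mpr (Nat.factorial_ne_zero _)
    have hp2 : poch ((t:ℝ)+1) (n - t) = (n.factorial : ℝ) / (t.factorial : ℝ) := by
      rw [eq_div_iff hft, mul_comm, hp]
    rw [hp2, ← hc]
    field_simp
  rw [Finset.sum_congr rfl key, ← Finset.mul_sum, vand ((lam:ℝ)+1) (β-1) n,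
    show (lam:ℝ)+1+(β-1) = β + lam from by ring]

lemma U_lemma (β : ℝ) (k i : ℕ) (h : i ≤ k) :
    ∑ lam ∈ Finset.Icc i k, (lam.factorial : ℝ) * poch (β + lam) (k - lam)
        * (poch (β + i) (lam - i) / ((lam-i).factorial : ℝ))
      = (i.factorial : ℝ) * (((k+1).choose (i+1) : ℕ) : ℝ) * poch (β + i) (k - i) := by
  have key : ∀ lam ∈ Finset.Icc i k,
      (lam.factorial : ℝ) * poch (β + lam) (k - lam)
        * (poch (β + i) (lam - i) / ((lam-i).factorial : ℝ))
      = ((lam.choose i : ℕ) : ℝ) * ((i.factorial : ℝ) * poch (β + i) (k - i)) := by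
    intro lam hlam
    obtain ⟨h1, h2⟩ := Finset.mem_Icc.mp hlam
    have hadd := poch_add (β + i) (lam - i) (k - lam)
    rw [show (lam - i) + (k - lam) = k - i from by omega,
      show β + (i:ℝ) + ((lam - i : ℕ) : ℝ) = β + lam from by
        rw [Nat.cast_sub h1]; ring] at hadd
    rw [hadd, ← Nat.choose_mul_factorial_mul_factorial h1]
    have hfli : ((lam-i).factorial : ℝ) ≠ 0 := Nat.cast_ne_zero.mpr (Nat.factorial_ne_zero _)
    push_cast
    field_simp
  rw [Finset.sum_congr rfl key, ← Finset.sum_mul]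
  have hs : (∑ lam ∈ Finset.Icc i k, ((lam.choose i : ℕ) : ℝ)) = (((k+1).choose (i+1) : ℕ) : ℝ) := by
    rw [← Nat.cast_sum, Nat.sum_Icc_choose]
  rw [hs]; ring

lemma d_eval (β z : ℝ) (k : ℕ) :
    prodCoeff (fun m => poch (β-1) m / (m.factorial : ℝ)) (fun m => laguerre (β-1) z m) (k+1)
    = ∑ i ∈ Finset.range (k+1), (-1:ℝ)^i / ((i+1).factorial : ℝ)
        * (poch (β + i) (k-i) / ((k-i).factorial : ℝ)) * z^i := by
  unfold prodCoeff
  simp only [Nat.add_sub_cancel]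
  have swap1 : (∑ ν ∈ Finset.range (k+1), ∑ l ∈ Finset.range (ν+1),
        (ν.factorial : ℝ) * poch ((ν:ℝ) - l + 1) (k - ν)
          * (poch (β-1) (k-ν) / ((k-ν).factorial : ℝ)) * laguerre (β-1) z l)
      = ∑ l ∈ Finset.range (k+1), ∑ ν ∈ Finset.Icc l k,
        (ν.factorial : ℝ) * poch ((ν:ℝ) - l + 1) (k - ν)
          * (poch (β-1) (k-ν) / ((k-ν).factorial : ℝ)) * laguerre (β-1) z l :=
    Finset.sum_comm' (fun ν l => by simp only [Finset.mem_range, Finset.mem_Icc]; omega)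
  rw [swap1]
  have step2 : ∀ l ∈ Finset.range (k+1),
      (∑ ν ∈ Finset.Icc l k,
        (ν.factorial : ℝ) * poch ((ν:ℝ) - l + 1) (k - ν)
          * (poch (β-1) (k-ν) / ((k-ν).factorial : ℝ)) * laguerre (β-1) z l)
      = ∑ i ∈ Finset.range (l+1),
          ((l.factorial : ℝ) * poch (β + l) (k - l))
            * ((-1:ℝ)^i / (i.factorial : ℝ) * (poch (β + i) (l-i) / ((l-i).factorial : ℝ)) * z^i) := by
    intro l hl
    have hlk : l ≤ k := Finset.mem_range_succ_iff.mp hl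
    rw [← Finset.sum_mul, T_lemma β k l hlk, laguerre, Finset.mul_sum]
    apply Finset.sum_congr rfl
    intro i _
    rw [show β - 1 + (i:ℝ) + 1 = β + i from by ring]
  rw [Finset.sum_congr rfl step2]
  have swap2 : (∑ l ∈ Finset.range (k+1), ∑ i ∈ Finset.range (l+1),
        ((l.factorial : ℝ) * poch (β + l) (k - l))
          * ((-1:ℝ)^i / (i.factorial : ℝ) * (poch (β + i) (l-i) / ((l-i).factorial : ℝ)) * z^i))
      = ∑ i ∈ Finset.range (k+1), ∑ l ∈ Finset.Icc i k,
        ((l.factorial : ℝ) * poch (β + l) (k - l))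
          * ((-1:ℝ)^i / (i.factorial : ℝ) * (poch (β + i) (l-i) / ((l-i).factorial : ℝ)) * z^i) :=
    Finset.sum_comm' (fun l i => by simp only [Finset.mem_range, Finset.mem_Icc]; omega)
  rw [swap2, Finset.mul_sum]
  apply Finset.sum_congr rfl
  intro i hi
  have hik : i ≤ k := Finset.mem_range_succ_iff.mp hi
  have rearr : ∀ l ∈ Finset.Icc i k,
      ((l.factorial : ℝ) * poch (β + l) (k - l))
        * ((-1:ℝ)^i / (i.factorial : ℝ) * (poch (β + i) (l-i) / ((l-i).factorial : ℝ)) * z^i)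
      = ((l.factorial : ℝ) * poch (β + l) (k - l)
          * (poch (β + i) (l-i) / ((l-i).factorial : ℝ)))
        * ((-1:ℝ)^i / (i.factorial : ℝ) * z^i) := by
    intro l _
    ring
  rw [Finset.sum_congr rfl rearr, ← Finset.sum_mul, U_lemma β k i hik]
  have hC : ((((k+1).choose (i+1) : ℕ)) : ℝ) * ((i+1).factorial : ℝ) * ((k-i).factorial : ℝ)
      = ((k+1).factorial : ℝ) := by
    have := Nat.choose_mul_factorial_mul_factorial (show i+1 ≤ k+1 from by omega)
    rw [show k + 1 - (i+1) = k - i from by omega] at this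
    exact_mod_cast this
  have h1 : ((i+1).factorial : ℝ) = ((i:ℝ)+1) * (i.factorial : ℝ) := by
    rw [Nat.factorial_succ]; push_cast; ring
  have hfi : (i.factorial : ℝ) ≠ 0 := Nat.cast_ne_zero.mpr (Nat.factorial_ne_zero _)
  have hfk : ((k-i).factorial : ℝ) ≠ 0 := Nat.cast_ne_zero.mpr (Nat.factorial_ne_zero _)
  have hfk1 : ((k+1).factorial : ℝ) ≠ 0 := Nat.cast_ne_zero.mpr (Nat.factorial_ne_zero _)
  have hCne : ((((k+1).choose (i+1) : ℕ)) : ℝ) ≠ 0 := by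
    have := Nat.choose_pos (show i+1 ≤ k+1 from by omega)
    positivity
  have hi1 : ((i:ℝ)+1) ≠ 0 := by positivity
  rw [← hC, h1]
  field_simp

noncomputable def gg (β z : ℝ) (k j : ℕ) : ℝ :=
  (-1:ℝ)^j / (j.factorial : ℝ) * (poch (β + j - 1) (k+1-j) / ((k+1-j).factorial : ℝ)) * z^j

lemma lag_diff (β z : ℝ) (k : ℕ) :
    laguerre (β-1) z (k+1)
    = laguerre (β-1) z k + poch (β-1) (k+1) / ((k+1).factorial : ℝ)
      + ∑ i ∈ Finset.range (k+1), (-1:ℝ)^(i+1) / ((i+1).factorial : ℝ)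
          * (poch (β + i) (k-i) / ((k-i).factorial : ℝ)) * z^(i+1) := by
  have gg0 : gg β z k 0 = poch (β-1) (k+1) / ((k+1).factorial : ℝ) := by
    simp only [gg, pow_zero, Nat.factorial_zero, Nat.cast_one, Nat.sub_zero, Nat.cast_zero]
    rw [show β + (0:ℝ) - 1 = β - 1 from by ring]
    simp
  have ggsucc : ∀ i ∈ Finset.range (k+1), gg β z k (i+1)
      = (-1:ℝ)^(i+1) / ((i+1).factorial : ℝ)
          * (poch (β + i) (k-i) / ((k-i).factorial : ℝ)) * z^(i+1) := by
    intro i hi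
    have hik : i ≤ k := Finset.mem_range_succ_iff.mp hi
    simp only [gg]
    rw [show k + 1 - (i+1) = k - i from by omega,
      show β + ((i+1 : ℕ):ℝ) - 1 = β + i from by push_cast; ring]
  have key : ∀ j ∈ Finset.range (k+1),
      ((-1:ℝ)^j / (j.factorial : ℝ))
          * (poch (β-1+j+1) (k+1-j) / ((k+1-j).factorial : ℝ)) * z^j
      = ((-1:ℝ)^j / (j.factorial : ℝ))
          * (poch (β-1+j+1) (k-j) / ((k-j).factorial : ℝ)) * z^j
        + gg β z k j := by
    intro j hj
    have hjk : j ≤ k := Finset.mem_range_succ_iff.mp hj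
    have hs : k + 1 - j = (k - j) + 1 := by omega
    simp only [gg]
    rw [hs, poch_succ, poch_succ_left,
      show β + (j:ℝ) - 1 + 1 = β - 1 + j + 1 from by ring, Nat.factorial_succ]
    have hfn : (((k-j).factorial) : ℝ) ≠ 0 := Nat.cast_ne_zero.mpr (Nat.factorial_ne_zero _)
    have hfj : ((j.factorial) : ℝ) ≠ 0 := Nat.cast_ne_zero.mpr (Nat.factorial_ne_zero _)
    have hjk' : (j:ℝ) ≤ (k:ℝ) := Nat.cast_le.mpr hjk
    have hden : ((k:ℝ) - (j:ℝ) + 1) ≠ 0 := ne_of_gt (by linarith)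
    push_cast
    field_simp
    ring
  have last : ((-1:ℝ)^(k+1) / ((k+1).factorial : ℝ))
      * (poch (β-1+(k+1 : ℕ)+1) (k+1-(k+1)) / ((k+1-(k+1)).factorial : ℝ)) * z^(k+1)
      = gg β z k (k+1) := by
    simp only [gg, Nat.sub_self]
    simp [poch_zero]
  rw [laguerre]
  rw [Finset.sum_range_succ, Finset.sum_congr rfl key, Finset.sum_add_distrib, last]
  have fold : (∑ j ∈ Finset.range (k+1), ((-1:ℝ)^j / (j.factorial : ℝ))
      * (poch (β-1+j+1) (k-j) / ((k-j).factorial : ℝ)) * z^j) = laguerre (β-1) z k := rfl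
  rw [fold]
  have e3 := Finset.sum_range_succ (fun i => gg β z k (i+1)) k
  have e4 : (∑ i ∈ Finset.range (k+1), gg β z k (i+1))
      = ∑ i ∈ Finset.range (k+1), (-1:ℝ)^(i+1) / ((i+1).factorial : ℝ)
          * (poch (β + i) (k-i) / ((k-i).factorial : ℝ)) * z^(i+1) :=
    Finset.sum_congr rfl ggsucc
  have e5 := Finset.sum_range_succ' (gg β z k) k
  rw [gg0] at e5
  linarith [e3, e4, e5]

/-- With `b_k = (β−1)_k/k!` and `c_k = L_k^{(β−1)}(z)` (generalized Laguerre polynomial,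
note `(β−1+j+1)_{k−j} = (β+j)_{k−j}`), the sequence `c` satisfies the `ρ₀ = 0`
converging-factor recursion: `c_0 = b_0 = 1` and `c_k = c_{k−1} + b_k − z d_k` for `k ≥ 1`. -/
theorem laguerre_solves_euler_convFactor_recursion (β z : ℝ) :
    (fun k : ℕ => laguerre (β - 1) z k) 0 = (fun k : ℕ => poch (β - 1) k / (Nat.factorial k : ℝ)) 0
    ∧ (fun k : ℕ => poch (β - 1) k / (Nat.factorial k : ℝ)) 0 = 1
    ∧ ∀ k : ℕ, laguerre (β - 1) z (k + 1)
        = laguerre (β - 1) z k + poch (β - 1) (k + 1) / (Nat.factorial (k + 1) : ℝ)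
          - z * prodCoeff (fun k : ℕ => poch (β - 1) k / (Nat.factorial k : ℝ))
                (fun k : ℕ => laguerre (β - 1) z k) (k + 1) := by
  refine ⟨?_, ?_, ?_⟩
  · simp [laguerre, poch]
  · simp [poch]
  · intro k
    have hneg : (∑ i ∈ Finset.range (k+1), (-1:ℝ)^(i+1) / ((i+1).factorial : ℝ)
          * (poch (β + i) (k-i) / ((k-i).factorial : ℝ)) * z^(i+1))
        = -(∑ i ∈ Finset.range (k+1), z * ((-1:ℝ)^i / ((i+1).factorial : ℝ)
          * (poch (β + i) (k-i) / ((k-i).factorial : ℝ)) * z^i)) := by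
      rw [← Finset.sum_neg_distrib]
      apply Finset.sum_congr rfl
      intro i _
      ring
    rw [lag_diff β z k, d_eval β z k, Finset.mul_sum, hneg]
    ring
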